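/- Let k be even, let t and m be positive integers with t + m = k and t even, and let r be even. Let d be a bent function on 𝔽₂^k with dual d*. Let a, h₁, …, h_t be Boolean functions on 𝔽₂^r such that a ⊕ δ·(h₁,…,h_t) is a bent function on 𝔽₂^r for every δ ∈ 𝔽₂^t. If for every v ∈ 𝔽₂^m and every u ∈ 𝔽₂^r one has ∑_{δ∈𝔽₂^t} (−1)^{d*(δ,v) ⊕ (a ⊕ δ·(h₁,…,h_t))*(u)} ∈ {2^{t/2}, −2^{t/2}}, where (δ,v) denotes the concatenated vector in 𝔽₂^k, then 𝔣(x,y) = a(x) ⊕ d(h₁(x),…,h_t(x), y) is a bent function on 𝔽₂^{r+m}. -/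
import Mathlib


open Finset

def dotp {ι : Type*} [Fintype ι] (a b : ι → ZMod 2) : ZMod 2 := ∑ i, a i * b i

def WHT {ι : Type*} [Fintype ι] [DecidableEq ι]
    (f : (ι → ZMod 2) → ZMod 2) (ω : ι → ZMod 2) : ℤ :=
  ∑ x : ι → ZMod 2, (-1 : ℤ) ^ ((f x + dotp ω x).val)

def IsBent {ι : Type*} [Fintype ι] [DecidableEq ι] (f : (ι → ZMod 2) → ZMod 2) : Prop :=
  ∀ ω, |WHT f ω| = 2 ^ (Fintype.card ι / 2)

def IsDualBent {ι : Type*} [Fintype ι] [DecidableEq ι] (f g : (ι → ZMod 2) → ZMod 2) : Prop :=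
  ∀ ω, WHT f ω = 2 ^ (Fintype.card ι / 2) * (-1 : ℤ) ^ ((g ω).val)

def IsPlateaued {ι : Type*} [Fintype ι] [DecidableEq ι] (s : ℕ) (f : (ι → ZMod 2) → ZMod 2) : Prop :=
  ∀ ω, WHT f ω = 0 ∨ WHT f ω = 2 ^ ((Fintype.card ι + s) / 2) ∨
    WHT f ω = -(2 ^ ((Fintype.card ι + s) / 2))

def WSupport {ι : Type*} [Fintype ι] [DecidableEq ι] (f : (ι → ZMod 2) → ZMod 2) : Set (ι → ZMod 2) :=
  {ω | WHT f ω ≠ 0}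


lemma sign_add (a b : ZMod 2) : (-1:ℤ)^((a+b).val) = (-1:ℤ)^a.val * (-1:ℤ)^b.val := by
  revert a b; decide

lemma signSum {α : Type*} (s : Finset α) (f : α → ZMod 2) :
    (-1:ℤ)^((∑ i ∈ s, f i).val) = ∏ i ∈ s, (-1:ℤ)^((f i).val) := by
  induction s using Finset.cons_induction with
  | empty => simp
  | cons a s ha ih => rw [Finset.sum_cons, Finset.prod_cons, sign_add, ih]

lemma zsum (c : ZMod 2) : ∑ b : ZMod 2, (-1:ℤ)^((b*c).val) = if c = 0 then 2 else 0 := by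
  revert c; decide

lemma dotp_append {t m : ℕ} (δ z : Fin t → ZMod 2) (v y : Fin m → ZMod 2) :
    dotp (Fin.append δ v) (Fin.append z y) = dotp δ z + dotp v y := by
  unfold dotp
  rw [Fin.sum_univ_add]
  simp [Fin.append_left, Fin.append_right]

lemma dotp_add_right {ι : Type*} [Fintype ι] (a b c : ι → ZMod 2) :
    dotp a (b + c) = dotp a b + dotp a c := by
  simp [dotp, mul_add, Finset.sum_add_distrib]

lemma orth {t : ℕ} (w : Fin t → ZMod 2) :
    ∑ δ : Fin t → ZMod 2, (-1:ℤ)^((dotp δ w).val) = if w = 0 then 2^t else 0 := by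
  have key : ∑ δ : Fin t → ZMod 2, (-1:ℤ)^((dotp δ w).val)
      = ∏ i : Fin t, ∑ b : ZMod 2, (-1:ℤ)^((b * w i).val) := by
    rw [Finset.prod_univ_sum]
    rw [← Fintype.piFinset_univ]
    exact Finset.sum_congr rfl fun δ _ => signSum _ _
  rw [key]
  by_cases hw : w = 0
  · subst hw; simp [zsum]
  · obtain ⟨i, hi⟩ := Function.ne_iff.mp hw
    rw [if_neg hw]
    exact Finset.prod_eq_zero (Finset.mem_univ i) (by rw [zsum, if_neg (by simpa using hi)])

def appendEquiv (t m : ℕ) : ((Fin t → ZMod 2) × (Fin m → ZMod 2)) ≃ (Fin (t+m) → ZMod 2) where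
  toFun p := Fin.append p.1 p.2
  invFun w := (fun i => w (Fin.castAdd m i), fun i => w (Fin.natAdd t i))
  left_inv p := by
    ext i <;> simp [Fin.append_left, Fin.append_right]
  right_inv w := Fin.append_castAdd_natAdd

lemma sum_append {t m : ℕ} (F : (Fin (t+m) → ZMod 2) → ℤ) :
    ∑ w : Fin (t+m) → ZMod 2, F w
      = ∑ z : Fin t → ZMod 2, ∑ y : Fin m → ZMod 2, F (Fin.append z y) := by
  rw [← Equiv.sum_comp (appendEquiv t m), Fintype.sum_prod_type]
  rfl

lemma zmod2_fun_add_eq_zero {X : Type*} (z z' : X → ZMod 2) : z + z' = 0 ↔ z' = z := by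
  constructor
  · intro hzz
    funext i
    have := congrFun hzz i
    revert this
    simp only [Pi.add_apply, Pi.zero_apply]
    revert i
    intro i
    generalize z i = A; generalize z' i = B
    revert A B; decide
  · rintro rfl
    funext i; simp only [Pi.add_apply, Pi.zero_apply]
    exact CharTwo.add_self_eq_zero _

lemma keyB {t m : ℕ} (d ddual : (Fin (t+m) → ZMod 2) → ZMod 2)
    (hddual : IsDualBent d ddual) (z : Fin t → ZMod 2) (v : Fin m → ZMod 2) :
    (2:ℤ)^t * ∑ y : Fin m → ZMod 2, (-1:ℤ)^((d (Fin.append z y) + dotp v y).val)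
      = 2^((t+m)/2) * ∑ δ : Fin t → ZMod 2,
          (-1:ℤ)^((dotp δ z).val) * (-1:ℤ)^((ddual (Fin.append δ v)).val) := by
  have step1 : (2:ℤ)^((t+m)/2) * ∑ δ : Fin t → ZMod 2,
        (-1:ℤ)^((dotp δ z).val) * (-1:ℤ)^((ddual (Fin.append δ v)).val)
      = ∑ δ : Fin t → ZMod 2, (-1:ℤ)^((dotp δ z).val) * WHT d (Fin.append δ v) := by
    rw [Finset.mul_sum]
    refine Finset.sum_congr rfl fun δ _ => ?_
    rw [hddual (Fin.append δ v)]
    simp only [Fintype.card_fin]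
    ring
  have step2 : ∀ δ : Fin t → ZMod 2, WHT d (Fin.append δ v)
      = ∑ z' : Fin t → ZMod 2, ∑ y : Fin m → ZMod 2,
          (-1:ℤ)^((d (Fin.append z' y) + (dotp δ z' + dotp v y)).val) := by
    intro δ
    rw [WHT, sum_append]
    exact Finset.sum_congr rfl fun z' _ => Finset.sum_congr rfl fun y _ => by
      rw [dotp_append]
  have term : ∀ (δ z' : Fin t → ZMod 2) (y : Fin m → ZMod 2),
      (-1:ℤ)^((dotp δ z).val) * (-1:ℤ)^((d (Fin.append z' y) + (dotp δ z' + dotp v y)).val)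
        = (-1:ℤ)^((d (Fin.append z' y) + dotp v y).val) * (-1:ℤ)^((dotp δ (z + z')).val) := by
    intro δ z' y
    rw [dotp_add_right, sign_add (d _) (dotp δ z' + dotp v y), sign_add (dotp δ z'),
        sign_add (dotp δ z) (dotp δ z'), sign_add (d _) (dotp v y)]
    ring
  rw [step1]
  symm
  calc ∑ δ : Fin t → ZMod 2, (-1:ℤ)^((dotp δ z).val) * WHT d (Fin.append δ v)
      = ∑ δ : Fin t → ZMod 2, ∑ z' : Fin t → ZMod 2, ∑ y : Fin m → ZMod 2,
          (-1:ℤ)^((d (Fin.append z' y) + dotp v y).val) * (-1:ℤ)^((dotp δ (z + z')).val) := by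
        refine Finset.sum_congr rfl fun δ _ => ?_
        rw [step2 δ, Finset.mul_sum]
        refine Finset.sum_congr rfl fun z' _ => ?_
        rw [Finset.mul_sum]
        exact Finset.sum_congr rfl fun y _ => term δ z' y
    _ = ∑ z' : Fin t → ZMod 2, ∑ y : Fin m → ZMod 2,
          (-1:ℤ)^((d (Fin.append z' y) + dotp v y).val) * ∑ δ : Fin t → ZMod 2,
            (-1:ℤ)^((dotp δ (z + z')).val) := by
        rw [Finset.sum_comm]
        refine Finset.sum_congr rfl fun z' _ => ?_
        rw [Finset.sum_comm]
        refine Finset.sum_congr rfl fun y _ => ?_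
        rw [Finset.mul_sum]
    _ = ∑ z' : Fin t → ZMod 2, ∑ y : Fin m → ZMod 2,
          (-1:ℤ)^((d (Fin.append z' y) + dotp v y).val) * (if z' = z then 2^t else 0) := by
        refine Finset.sum_congr rfl fun z' _ => Finset.sum_congr rfl fun y _ => ?_
        rw [orth]; simp only [zmod2_fun_add_eq_zero]
    _ = (2:ℤ)^t * ∑ y : Fin m → ZMod 2, (-1:ℤ)^((d (Fin.append z y) + dotp v y).val) := by
        rw [Finset.sum_comm, Finset.mul_sum]
        refine Finset.sum_congr rfl fun y _ => ?_
        simp only [mul_ite, mul_zero]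
        rw [Finset.sum_ite_eq' Finset.univ z
          (fun z' => (-1:ℤ)^((d (Fin.append z' y) + dotp v y).val) * 2^t)]
        simp [mul_comm]

lemma sum_sumtype {r m : ℕ} (F : ((Fin r ⊕ Fin m) → ZMod 2) → ℤ) :
    ∑ x : (Fin r ⊕ Fin m) → ZMod 2, F x
      = ∑ x₁ : Fin r → ZMod 2, ∑ x₂ : Fin m → ZMod 2, F (Sum.elim x₁ x₂) := by
  rw [← Equiv.sum_comp (Equiv.sumArrowEquivProdArrow (Fin r) (Fin m) (ZMod 2)).symm,
    Fintype.sum_prod_type]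
  rfl

lemma dotp_sum {r m : ℕ} (ω x : (Fin r ⊕ Fin m) → ZMod 2) :
    dotp ω x = dotp (ω ∘ Sum.inl) (x ∘ Sum.inl) + dotp (ω ∘ Sum.inr) (x ∘ Sum.inr) := by
  simp [dotp, Fintype.sum_sum_type]


/-- with `k = t + m` even, `t` even, `r` even, `d` bent on `𝔽₂^k` with
dual `d*`, and `a ⊕ δ·(h₁,…,h_t)` bent on `𝔽₂^r` with dual `(a ⊕ δ·(h₁,…,h_t))*`
for every `δ ∈ 𝔽₂^t`, if for all `v, u` the sum
`∑_δ (-1)^(d*(δ,v) ⊕ (a ⊕ δ·(h₁,…,h_t))*(u))` equals `±2^(t/2)`, then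
`𝔣(x,y) = a(x) ⊕ d(h₁(x),…,h_t(x),y)` is bent on `𝔽₂^(r+m)`. -/
theorem stmt8 {t m r : ℕ} (ht : 0 < t) (hm : 0 < m) (hte : Even t)
    (hke : Even (t + m)) (hre : Even r)
    (d : (Fin (t + m) → ZMod 2) → ZMod 2) (hd : IsBent d)
    (ddual : (Fin (t + m) → ZMod 2) → ZMod 2) (hddual : IsDualBent d ddual)
    (a : (Fin r → ZMod 2) → ZMod 2) (h : Fin t → (Fin r → ZMod 2) → ZMod 2)
    (gdual : (Fin t → ZMod 2) → (Fin r → ZMod 2) → ZMod 2)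
    (hbent : ∀ δ : Fin t → ZMod 2,
      IsDualBent (fun x => a x + dotp δ (fun i => h i x)) (gdual δ))
    (hcond : ∀ (v : Fin m → ZMod 2) (u : Fin r → ZMod 2),
      (∑ δ : Fin t → ZMod 2,
        (-1 : ℤ) ^ ((ddual (Fin.append δ v) + gdual δ u).val)) = 2 ^ (t / 2) ∨
      (∑ δ : Fin t → ZMod 2,
        (-1 : ℤ) ^ ((ddual (Fin.append δ v) + gdual δ u).val)) = -(2 ^ (t / 2))) :
    IsBent (fun x : (Fin r ⊕ Fin m) → ZMod 2 =>
      a (x ∘ Sum.inl) +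
        d (Fin.append (fun i => h i (x ∘ Sum.inl)) (x ∘ Sum.inr))) := by

  intro ω
  set u : Fin r → ZMod 2 := ω ∘ Sum.inl with hu
  set v : Fin m → ZMod 2 := ω ∘ Sum.inr with hv
  set f : ((Fin r ⊕ Fin m) → ZMod 2) → ZMod 2 := fun x =>
    a (x ∘ Sum.inl) + d (Fin.append (fun i => h i (x ∘ Sum.inl)) (x ∘ Sum.inr)) with hf
  set S : ℤ := ∑ δ : Fin t → ZMod 2,
      (-1 : ℤ) ^ ((ddual (Fin.append δ v) + gdual δ u).val) with hSdef
  -- Step 1: expand WHT f ω as a double sum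
  have e1 : WHT f ω = ∑ x₁ : Fin r → ZMod 2, ∑ x₂ : Fin m → ZMod 2,
      (-1:ℤ)^((a x₁ + dotp u x₁).val) *
        (-1:ℤ)^((d (Fin.append (fun i => h i x₁) x₂) + dotp v x₂).val) := by
    rw [WHT, sum_sumtype]
    refine Finset.sum_congr rfl fun x₁ _ => Finset.sum_congr rfl fun x₂ _ => ?_
    have harg : f (Sum.elim x₁ x₂) + dotp ω (Sum.elim x₁ x₂)
        = (a x₁ + dotp u x₁) + (d (Fin.append (fun i => h i x₁) x₂) + dotp v x₂) := by
      show (a x₁ + d (Fin.append (fun i => h i x₁) x₂)) + dotp ω (Sum.elim x₁ x₂) = _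
      rw [dotp_sum ω (Sum.elim x₁ x₂)]
      show (a x₁ + d (Fin.append (fun i => h i x₁) x₂)) + (dotp u x₁ + dotp v x₂) = _
      ring
    rw [harg, sign_add]
  -- Step 2: key computation
  have key : (2:ℤ)^t * WHT f ω = 2^((t+m)/2) * 2^(r/2) * S := by
    calc (2:ℤ)^t * WHT f ω
        = ∑ x₁ : Fin r → ZMod 2, (-1:ℤ)^((a x₁ + dotp u x₁).val) *
            ((2:ℤ)^t * ∑ x₂ : Fin m → ZMod 2,
              (-1:ℤ)^((d (Fin.append (fun i => h i x₁) x₂) + dotp v x₂).val)) := by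
          rw [e1, Finset.mul_sum]
          refine Finset.sum_congr rfl fun x₁ _ => ?_
          rw [← Finset.mul_sum]
          ring
      _ = ∑ x₁ : Fin r → ZMod 2, (-1:ℤ)^((a x₁ + dotp u x₁).val) *
            (2^((t+m)/2) * ∑ δ : Fin t → ZMod 2,
              (-1:ℤ)^((dotp δ (fun i => h i x₁)).val) *
                (-1:ℤ)^((ddual (Fin.append δ v)).val)) := by
          refine Finset.sum_congr rfl fun x₁ _ => ?_
          rw [keyB d ddual hddual (fun i => h i x₁) v]
      _ = 2^((t+m)/2) * ∑ x₁ : Fin r → ZMod 2, ∑ δ : Fin t → ZMod 2,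
            (-1:ℤ)^(((a x₁ + dotp δ (fun i => h i x₁)) + dotp u x₁).val) *
              (-1:ℤ)^((ddual (Fin.append δ v)).val) := by
          have inner : ∀ x₁ : Fin r → ZMod 2,
              (-1:ℤ)^((a x₁ + dotp u x₁).val) * (2^((t+m)/2) * ∑ δ : Fin t → ZMod 2,
                (-1:ℤ)^((dotp δ (fun i => h i x₁)).val) * (-1:ℤ)^((ddual (Fin.append δ v)).val))
              = 2^((t+m)/2) * ∑ δ : Fin t → ZMod 2,
                (-1:ℤ)^(((a x₁ + dotp δ (fun i => h i x₁)) + dotp u x₁).val) *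
                  (-1:ℤ)^((ddual (Fin.append δ v)).val) := by
            intro x₁
            rw [Finset.mul_sum, Finset.mul_sum, Finset.mul_sum]
            refine Finset.sum_congr rfl fun δ _ => ?_
            rw [sign_add (a x₁ + dotp δ fun i => h i x₁) (dotp u x₁),
              sign_add (a x₁) (dotp δ fun i => h i x₁), sign_add (a x₁) (dotp u x₁)]
            ring
          rw [Finset.sum_congr rfl fun x₁ _ => inner x₁, ← Finset.mul_sum]
      _ = 2^((t+m)/2) * ∑ δ : Fin t → ZMod 2, ∑ x₁ : Fin r → ZMod 2,
            (-1:ℤ)^(((a x₁ + dotp δ (fun i => h i x₁)) + dotp u x₁).val) *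
              (-1:ℤ)^((ddual (Fin.append δ v)).val) := by
          rw [Finset.sum_comm]
      _ = 2^((t+m)/2) * ∑ δ : Fin t → ZMod 2,
            WHT (fun x => a x + dotp δ (fun i => h i x)) u *
              (-1:ℤ)^((ddual (Fin.append δ v)).val) := by
          congr 1
          refine Finset.sum_congr rfl fun δ _ => ?_
          rw [WHT, Finset.sum_mul]
      _ = 2^((t+m)/2) * ∑ δ : Fin t → ZMod 2,
            (2^(r/2) * (-1:ℤ)^((gdual δ u).val)) *
              (-1:ℤ)^((ddual (Fin.append δ v)).val) := by
          congr 1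
          refine Finset.sum_congr rfl fun δ _ => ?_
          rw [hbent δ u]
          simp [Fintype.card_fin]
      _ = 2^((t+m)/2) * 2^(r/2) * S := by
          rw [hSdef, mul_assoc, Finset.mul_sum, Finset.mul_sum, Finset.mul_sum]
          refine Finset.sum_congr rfl fun δ _ => ?_
          rw [sign_add]
          ring
  -- Step 3: conclude
  have hme : Even m := by
    rcases hke with ⟨c, hc⟩; rcases hte with ⟨p, hp⟩; exact ⟨c - p, by omega⟩
  have hcard : Fintype.card (Fin r ⊕ Fin m) = r + m := by simp
  rw [hcard]
  have h2t : ((2:ℤ)^t) ≠ 0 := by positivity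
  refine mul_left_cancel₀ h2t ?_
  have habs : (2:ℤ)^t * |WHT f ω| = |(2:ℤ)^t * WHT f ω| := by
    rw [abs_mul, abs_pow, abs_two]
  have hexp : (t+m)/2 + r/2 + t/2 = t + (r+m)/2 := by
    rcases hte with ⟨p, hp⟩; rcases hme with ⟨q, hq⟩; rcases hre with ⟨s, hs⟩
    omega
  have hval : |(2:ℤ)^t * WHT f ω| = 2^((t+m)/2 + r/2 + t/2) := by
    rw [key]
    rcases hcond v u with hc | hc
    · rw [← hSdef] at hc
      rw [hc, pow_add, pow_add]
      rw [abs_of_nonneg (by positivity)]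
    · rw [← hSdef] at hc
      rw [hc, mul_neg, abs_neg, pow_add, pow_add]
      rw [abs_of_nonneg (by positivity)]
  rw [habs, hval, hexp, pow_add]
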